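/- Spectral decomposition of the N-walk transfer matrices: under the one-walk Bethe hypotheses, for all appropriate y, y': (T_N^{oe})_{y,y'} = Σ_{k ∈ K_N} Λ_k Φ^o_k(y) Ψ^e_k(y')*, (T_N^{eo})_{y,y'} = Σ_{k ∈ K_N} Λ_k Φ^e_k(y) Ψ^o_k(y')*, (T_N^{e·e})_{y,y'} = Σ_{k ∈ K_N} Λ_k² Φ^e_k(y) Ψ^e_k(y')*, and (T_N^{o·o})_{y,y'} = Σ_{k ∈ K_N} Λ_k² Φ^o_k(y) Ψ^o_k(y')*, where T_N^{e·e} = T_N^{eo} T_N^{oe} and T_N^{o·o} = T_N^{oe} T_N^{eo}. -/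

import Mathlib

open Finset BigOperators
open scoped Classical

noncomputable section

/-- The odd sites of the strip: `{y : 1 ≤ y ≤ L, y odd}`. -/
def SetO (L : ℤ) : Finset ℤ := (Finset.Icc 1 L).filter (fun y => Odd y)

/-- The even sites of the strip: `{y : 0 ≤ y ≤ L, y even}`. -/
def SetE (L : ℤ) : Finset ℤ := (Finset.Icc 0 L).filter (fun y => Even y)

/-- Parity-indexed site sets: `true ↦ odd`, `false ↦ even`. -/
def Sp (L : ℤ) : Bool → Finset ℤ := fun p => if p then SetO L else SetE L

/-- Strictly increasing `N`-tuples with entries in `S`. -/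
def UU {α : Type*} [LinearOrder α] (S : Finset α) (N : ℕ) : Finset (Fin N → α) :=
  (Fintype.piFinset (fun _ => S)).filter (fun y => ∀ i j : Fin N, i < j → y i < y j)

/-- One-step transfer matrix entry: `w y y'` when `|y - y'| = 1`, and `0` otherwise. -/
def T1 (w : ℤ → ℤ → ℂ) (y y' : ℤ) : ℂ := if |y - y'| = 1 then w y y' else 0

/-- `N`-walk transfer matrix entry: product of one-step entries. -/
def TN (w : ℤ → ℤ → ℂ) {N : ℕ} (y y' : Fin N → ℤ) : ℂ := ∏ i, T1 w (y i) (y' i)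

/-- Powers of a matrix indexed by a finite set `S`. -/
def matPow {α : Type*} [DecidableEq α] (S : Finset α) (M : α → α → ℂ) : ℕ → α → α → ℂ
  | 0 => fun y y' => if y = y' then 1 else 0
  | r + 1 => fun y y' => ∑ z ∈ S, matPow S M r y z * M z y'

/-- Weight of a family of `N` walks of length `t`. -/
def walkWeight (w : ℤ → ℤ → ℂ) (v : ℤ → ℂ) {N t : ℕ} (y : Fin N → Fin (t + 1) → ℤ) : ℂ :=
  (∏ j, v (y j 0)) * ∏ m : Fin t, ∏ j, w (y j m.castSucc) (y j m.succ)

/-- The constraints on families of non-intersecting walks in the strip `0 ≤ y ≤ L`. -/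
def stripCond (L : ℤ) {N t : ℕ} (yi yf : Fin N → ℤ) (y : Fin N → Fin (t + 1) → ℤ) : Prop :=
  (∀ j, y j 0 = yi j) ∧ (∀ j, y j (Fin.last t) = yf j) ∧
    (∀ j m, 0 ≤ y j m ∧ y j m ≤ L) ∧
    (∀ j, ∀ m : Fin t, y j m.succ = y j m.castSucc + 1 ∨ y j m.succ = y j m.castSucc - 1) ∧
    (∀ m, ∀ i j : Fin N, i < j → y i m < y j m)

/-- The `N`-walk strip generating function `Z^N_t(y^i → y^f)`. -/
def Zgen (L : ℤ) (w : ℤ → ℤ → ℂ) (v : ℤ → ℂ) (N t : ℕ) (yi yf : Fin N → ℤ) : ℂ :=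
  ∑ y ∈ (Fintype.piFinset
      (fun _ : Fin N => Fintype.piFinset (fun _ : Fin (t + 1) => Finset.Icc 0 L))).filter
        (stripCond L yi yf), walkWeight w v y

/-- The constraints on families of non-intersecting walks with a single wall `y ≥ 0`. -/
def barCond {N t : ℕ} (yi yf : Fin N → ℤ) (y : Fin N → Fin (t + 1) → ℤ) : Prop :=
  (∀ j, y j 0 = yi j) ∧ (∀ j, y j (Fin.last t) = yf j) ∧
    (∀ j m, 0 ≤ y j m) ∧
    (∀ j, ∀ m : Fin t, y j m.succ = y j m.castSucc + 1 ∨ y j m.succ = y j m.castSucc - 1) ∧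
    (∀ m, ∀ i j : Fin N, i < j → y i m < y j m)

/-- The one-wall `N`-walk generating function `Z̄^N_t(y^i → y^f)`. -/
def Zbar (w : ℤ → ℤ → ℂ) (v : ℤ → ℂ) (N t : ℕ) (yi yf : Fin N → ℤ) : ℂ :=
  ∑ᶠ (y : Fin N → Fin (t + 1) → ℤ) (_ : barCond yi yf y), walkWeight w v y

/-- The Bethe Ansatz determinant built from a family of one-walk vectors. -/
def BA {K X : Type*} {N : ℕ} (φ : K → X → ℂ) (k : Fin N → K) (y : Fin N → X) : ℂ :=
  ∑ σ : Equiv.Perm (Fin N), ((Equiv.Perm.sign σ : ℤ) : ℂ) * ∏ a, φ (k (σ a)) (y a)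

end

/-!
Completeness turns the eigenvalue equations into the one-walk decomposition
`T1 y y' = ∑ₖ λₖ φₖ(y) ψₖ(y')*`. For non-intersecting configurations of one parity a
permutation of the walks can only be compatible with single steps if it is the identity, so
`T_N` is the determinant of the matrix `(T1 (y a) (y' b))`; Cauchy–Binet then expands it
over increasing `k`, producing the Bethe determinants `Φ` and `Ψ`. The same expansion turns
one-walk biorthogonality into biorthogonality of the Bethe determinants, which collapses the
double sum in the two-step matrices.
-/

open Equiv Matrix

lemma mem_UU_iff {α : Type*} [LinearOrder α] {S : Finset α} {N : ℕ} {y : Fin N → α} :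
    y ∈ UU S N ↔ (∀ i, y i ∈ S) ∧ StrictMono y := by
  simp only [UU, mem_filter, Fintype.mem_piFinset]
  exact and_congr_right fun _ => ⟨fun h i j hij => h i j hij, fun h i j hij => h hij⟩

section CauchyBinet

variable {R α : Type*} [CommRing R] [LinearOrder α] {N : ℕ}

/-- An injective tuple is, uniquely, an increasing tuple composed with a permutation. -/
lemma sum_injective_eq_sum_UU_sum_perm {M : Type*} [AddCommMonoid M] (S : Finset α)
    (F : (Fin N → α) → M) :
    ∑ f ∈ (Fintype.piFinset fun _ => S) with Function.Injective f, F f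
      = ∑ z ∈ UU S N, ∑ τ : Perm (Fin N), F (z ∘ τ) := by
  rw [← sum_product']
  symm
  refine sum_bij (fun p _ => p.1 ∘ p.2) ?_ ?_ ?_ fun _ _ => rfl
  · rintro ⟨z, τ⟩ hp
    obtain ⟨hzS, hz⟩ := mem_UU_iff.mp (mem_product.mp hp).1
    simp only [mem_filter, Fintype.mem_piFinset, Function.comp_apply]
    exact ⟨fun b => hzS _, hz.injective.comp τ.injective⟩
  · rintro ⟨z₁, τ₁⟩ h₁ ⟨z₂, τ₂⟩ h₂ (h : z₁ ∘ τ₁ = z₂ ∘ τ₂)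
    have hz₁ : StrictMono z₁ := (mem_UU_iff.mp (mem_product.mp h₁).1).2
    have hz₂ : StrictMono z₂ := (mem_UU_iff.mp (mem_product.mp h₂).1).2
    have hz : z₁ = z₂ := (hz₁.range_inj hz₂).mp <| by
      rw [← τ₁.surjective.range_comp z₁, ← τ₂.surjective.range_comp z₂, h]
    subst hz
    simp only [Prod.mk.injEq, true_and]
    exact Equiv.ext fun b => hz₁.injective (congrFun h b)
  · intro f hf
    obtain ⟨hfS, hf⟩ := by simpa only [mem_filter, Fintype.mem_piFinset] using hf
    refine ⟨(f ∘ Tuple.sort f, (Tuple.sort f).symm), ?_, ?_⟩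
    · refine mem_product.mpr ⟨mem_UU_iff.mpr ⟨fun i => hfS _, ?_⟩, mem_univ _⟩
      exact (Tuple.monotone_sort f).strictMono_of_injective (hf.comp (Tuple.sort f).injective)
    · funext b
      simp

theorem det_sum_mul_eq_sum_UU (S : Finset α) (A : Fin N → α → R) (B : α → Fin N → R) :
    (of fun a b => ∑ z ∈ S, A a z * B z b).det
      = ∑ z ∈ UU S N, (of fun a b => A a (z b)).det * (of fun a b => B (z a) b).det := by
  have expand : (of fun a b => ∑ z ∈ S, A a z * B z b).det
      = ∑ f ∈ Fintype.piFinset (fun _ => S),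
          (of fun a b => A a (f b)).det * ∏ b, B (f b) b := by
    simp only [det_apply', of_apply, prod_univ_sum, prod_mul_distrib, mul_sum, sum_mul]
    rw [sum_comm]
    exact sum_congr rfl fun _ _ => sum_congr rfl fun _ _ => by ring
  have det_noninjective : ∀ f : Fin N → α, ¬ Function.Injective f →
      (of fun a b => A a (f b)).det = 0 := by
    intro f hf
    obtain ⟨i, j, hij, hne⟩ : ∃ i j, f i = f j ∧ i ≠ j := by
      simpa [Function.Injective, not_forall] using hf
    exact det_zero_of_column_eq hne fun a => by simp [hij]
  have permute : ∀ z : Fin N → α,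
      (of fun a b => A a (z b)).det * (of fun a b => B (z a) b).det
        = ∑ τ : Perm (Fin N), (of fun a b => A a (z (τ b))).det * ∏ b, B (z (τ b)) b := by
    intro z
    rw [det_apply' (of fun a b => B (z a) b), mul_sum]
    refine sum_congr rfl fun τ _ => ?_
    rw [show (of fun a b => A a (z (τ b))) = (of fun a b => A a (z b)).submatrix id τ from rfl,
      det_permute']
    simp only [of_apply]
    ring
  rw [expand, ← sum_filter_of_ne fun f _ h => of_not_not fun hf => h (by
    rw [det_noninjective f hf, zero_mul]), sum_injective_eq_sum_UU_sum_perm]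
  exact sum_congr rfl fun z _ => (permute z).symm

end CauchyBinet

theorem det_ite_eq_of_strictMono {R K : Type*} [CommRing R] [LinearOrder K] {N : ℕ}
    {k k' : Fin N → K} (hk : StrictMono k) (hk' : StrictMono k') :
    (of fun a b => if k a = k' b then (1 : R) else 0).det = if k = k' then 1 else 0 := by
  by_cases h : k = k'
  · subst h
    have hone : (of fun a b => if k a = k b then (1 : R) else 0) = 1 := by
      ext a b
      simp [one_apply, hk.injective.eq_iff]
    rw [hone, det_one, if_pos rfl]
  · rw [if_neg h]
    obtain ⟨a, ha⟩ : ∃ a, ∀ b, k a ≠ k' b := by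
      by_contra! hsub
      choose g hg using hsub
      have hg_mono : StrictMono g := fun a b hab =>
        hk'.lt_iff_lt.mp (by rw [← hg, ← hg]; exact hk hab)
      exact h (funext fun a => by rw [hg a, hg_mono.apply_eq])
    exact det_eq_zero_of_row_eq_zero a fun b => by simp [ha b]

section BetheDeterminant

variable {K X : Type*} {N : ℕ}

lemma BA_eq_det (φ : K → X → ℂ) (k : Fin N → K) (y : Fin N → X) :
    BA φ k y = (of fun a b => φ (k a) (y b)).det := by
  rw [det_apply']
  rfl

lemma BA_eq_det_transpose (φ : K → X → ℂ) (k : Fin N → K) (y : Fin N → X) :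
    BA φ k y = (of fun a b => φ (k b) (y a)).det := by
  rw [BA_eq_det, ← det_transpose]
  rfl

lemma star_BA (ψ : K → X → ℂ) (k : Fin N → K) (y : Fin N → X) :
    star (BA ψ k y) = BA (fun q x => star (ψ q x)) k y := by
  simp [BA, star_sum, star_prod, star_mul', star_intCast]

theorem sum_BA_mul_BA_of_biorthogonal [LinearOrder K] [LinearOrder X] (S : Finset X)
    (χ φ : K → X → ℂ) (horth : ∀ k k', ∑ z ∈ S, χ k z * φ k' z = if k = k' then 1 else 0)
    {k k' : Fin N → K} (hk : StrictMono k) (hk' : StrictMono k') :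
    ∑ z ∈ UU S N, BA χ k z * BA φ k' z = if k = k' then 1 else 0 := by
  calc ∑ z ∈ UU S N, BA χ k z * BA φ k' z
      = (of fun a b => ∑ z ∈ S, χ (k a) z * φ (k' b) z).det := by
        simp only [det_sum_mul_eq_sum_UU, BA_eq_det, ← BA_eq_det_transpose]
    _ = (of fun a b => if k a = k' b then (1 : ℂ) else 0).det := by simp only [horth]
    _ = if k = k' then 1 else 0 := det_ite_eq_of_strictMono hk hk'

end BetheDeterminant

theorem eq_sum_of_eigen_of_complete {R K X Y : Type*} [CommSemiring R] [Fintype K]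
    [DecidableEq Y]
    (S : Finset Y) (T : X → Y → R) (φa : K → X → R) (φb χ : K → Y → R) (lam : K → R) {y : X}
    (heig : ∀ k, ∑ z ∈ S, T y z * φb k z = lam k * φa k y)
    (hcomp : ∀ z ∈ S, ∀ y' ∈ S, ∑ k, φb k z * χ k y' = if z = y' then 1 else 0)
    {y' : Y} (hy' : y' ∈ S) :
    T y y' = ∑ k, lam k * φa k y * χ k y' := by
  calc T y y' = ∑ z ∈ S, T y z * ∑ k, φb k z * χ k y' := by
        rw [sum_congr rfl fun z hz => by rw [hcomp z hz y' hy']]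
        simp [hy']
    _ = ∑ k, (∑ z ∈ S, T y z * φb k z) * χ k y' := by
        simp only [mul_sum, sum_mul]
        rw [sum_comm]
        exact sum_congr rfl fun _ _ => sum_congr rfl fun _ _ => by ring
    _ = ∑ k, lam k * φa k y * χ k y' := by simp only [heig]

theorem sum_mul_sum_eq_sum_of_biorthogonal {R ι Z : Type*} [CommSemiring R] [DecidableEq ι]
    (I : Finset ι) (S : Finset Z) (c d u v' : ι → R) (v u' : ι → Z → R)
    (horth : ∀ k ∈ I, ∀ k' ∈ I, ∑ z ∈ S, v k z * u' k' z = if k = k' then 1 else 0) :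
    ∑ z ∈ S, (∑ k ∈ I, c k * u k * v k z) * (∑ k ∈ I, d k * u' k z * v' k)
      = ∑ k ∈ I, c k * d k * u k * v' k := by
  calc _ = ∑ k ∈ I, ∑ k' ∈ I,
        c k * u k * (d k' * v' k') * ∑ z ∈ S, v k z * u' k' z := by
        simp_rw [sum_mul_sum, mul_sum]
        conv_lhs => rw [sum_comm]
        refine sum_congr rfl fun _ _ => ?_
        conv_lhs => rw [sum_comm]
        exact sum_congr rfl fun _ _ => sum_congr rfl fun _ _ => by ring
    _ = ∑ k ∈ I, c k * d k * u k * v' k := by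
        refine sum_congr rfl fun k hk => ?_
        rw [sum_congr rfl fun k' hk' => by rw [horth k hk k' hk']]
        simp only [mul_ite, mul_one, mul_zero, sum_ite_eq, if_pos hk]
        ring

theorem add_two_le_of_mem_UU {S : Finset ℤ} (hS : ∀ x ∈ S, ∀ x' ∈ S, Even (x - x'))
    {N : ℕ} {y : Fin N → ℤ} (hy : y ∈ UU S N) {i j : Fin N} (hij : i < j) :
    y i + 2 ≤ y j := by
  obtain ⟨hyS, hy⟩ := mem_UU_iff.mp hy
  obtain ⟨m, hm⟩ := hS _ (hyS j) _ (hyS i)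
  have := hy hij
  omega

/-- Walks that keep their order can only be matched up by the identity permutation. -/
theorem det_T1_eq_TN (w : ℤ → ℤ → ℂ) {N : ℕ} {y y' : Fin N → ℤ}
    (hy : ∀ i j, i < j → y i + 2 ≤ y j) (hy' : StrictMono y') :
    (of fun a b => T1 w (y a) (y' b)).det = TN w y y' := by
  rw [det_apply', sum_eq_single (1 : Perm (Fin N))]
  · simp [TN]
  · intro σ _ hσ
    suffices ∃ b, T1 w (y (σ b)) (y' b) = 0 by
      obtain ⟨b, hb⟩ := this
      simp only [of_apply]
      rw [prod_eq_zero (mem_univ b) hb, mul_zero]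
    by_contra! hstep
    have hadj : ∀ b, |y (σ b) - y' b| = 1 := fun b => by
      by_contra hb
      exact hstep b (if_neg hb)
    refine hσ (Equiv.ext fun _ => StrictMono.apply_eq (f := σ) fun i j hij => ?_)
    by_contra hji
    have h1 := (abs_eq zero_le_one).mp (hadj i)
    have h2 := (abs_eq zero_le_one).mp (hadj j)
    have h3 := hy _ _ ((not_lt.mp hji).lt_of_ne (σ.injective.ne hij.ne'))
    have h4 := hy' hij
    omega
  · simp

theorem TN_eq_sum_BA {K : Type*} [Fintype K] [LinearOrder K] (w : ℤ → ℤ → ℂ)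
    {Sa Sb : Finset ℤ} (hSa : ∀ x ∈ Sa, ∀ x' ∈ Sa, Even (x - x'))
    {φa φb ψb : K → ℤ → ℂ} {lam : K → ℂ}
    (heig : ∀ k, ∀ y ∈ Sa, ∑ y' ∈ Sb, T1 w y y' * φb k y' = lam k * φa k y)
    (hcomp : ∀ y ∈ Sb, ∀ y' ∈ Sb,
      ∑ k, φb k y * star (ψb k y') = if y = y' then 1 else 0)
    {N : ℕ} {y y' : Fin N → ℤ} (hy : y ∈ UU Sa N) (hy' : y' ∈ UU Sb N) :
    TN w y y' = ∑ k ∈ UU univ N, (∏ a, lam (k a)) * BA φa k y * star (BA ψb k y') := by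
  have hT1 : (of fun a b => T1 w (y a) (y' b))
      = of fun a b => ∑ k ∈ univ, lam k * φa k (y a) * star (ψb k (y' b)) := by
    ext a b
    exact eq_sum_of_eigen_of_complete Sb (T1 w) φa φb (fun k y => star (ψb k y)) lam
      (fun k => heig k _ ((mem_UU_iff.mp hy).1 a)) hcomp ((mem_UU_iff.mp hy').1 b)
  rw [← det_T1_eq_TN w (fun _ _ => add_two_le_of_mem_UU hSa hy) (mem_UU_iff.mp hy').2, hT1,
    det_sum_mul_eq_sum_UU]
  refine sum_congr rfl fun k _ => ?_
  have hΦ : (of fun a b => lam (k b) * φa (k b) (y a)).det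
      = (∏ a, lam (k a)) * BA φa k y := by
    rw [BA_eq_det_transpose]
    exact det_mul_row _ _
  rw [hΦ, star_BA, BA_eq_det _ k y']

theorem sum_TN_mul_TN_eq_sum_BA {K : Type*} [Fintype K] [LinearOrder K] (w : ℤ → ℤ → ℂ)
    {Sa Sb : Finset ℤ} (hSa : ∀ x ∈ Sa, ∀ x' ∈ Sa, Even (x - x'))
    (hSb : ∀ x ∈ Sb, ∀ x' ∈ Sb, Even (x - x')) {φa φb ψa ψb : K → ℤ → ℂ} {lam : K → ℂ}
    (hab : ∀ k, ∀ y ∈ Sa, ∑ y' ∈ Sb, T1 w y y' * φb k y' = lam k * φa k y)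
    (hba : ∀ k, ∀ y ∈ Sb, ∑ y' ∈ Sa, T1 w y y' * φa k y' = lam k * φb k y)
    (horth : ∀ k k' : K, ∑ y ∈ Sb, star (ψb k y) * φb k' y = if k = k' then 1 else 0)
    (hcompa : ∀ y ∈ Sa, ∀ y' ∈ Sa,
      ∑ k, φa k y * star (ψa k y') = if y = y' then 1 else 0)
    (hcompb : ∀ y ∈ Sb, ∀ y' ∈ Sb,
      ∑ k, φb k y * star (ψb k y') = if y = y' then 1 else 0)
    {N : ℕ} {y y' : Fin N → ℤ} (hy : y ∈ UU Sa N) (hy' : y' ∈ UU Sa N) :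
    ∑ z ∈ UU Sb N, TN w y z * TN w z y'
      = ∑ k ∈ UU univ N, (∏ a, lam (k a)) ^ 2 * BA φa k y * star (BA ψa k y') := by
  rw [sum_congr rfl fun z hz => by
    rw [TN_eq_sum_BA w hSa hab hcompb hy hz, TN_eq_sum_BA w hSb hba hcompa hz hy'],
    sum_mul_sum_eq_sum_of_biorthogonal]
  · simp only [sq]
  · intro k hk k' hk'
    simp only [star_BA]
    exact sum_BA_mul_BA_of_biorthogonal Sb _ φb horth (mem_UU_iff.mp hk).2 (mem_UU_iff.mp hk').2

theorem bethe_spectral_decomposition_general (L : ℤ) (w : ℤ → ℤ → ℂ)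
    (K : Type*) [Fintype K] [LinearOrder K]
    (φo φe ψo ψe : K → ℤ → ℂ) (lam : K → ℂ)
    (heo : ∀ k, ∀ y ∈ SetE L, ∑ y' ∈ SetO L, T1 w y y' * φo k y' = lam k * φe k y)
    (hoe : ∀ k, ∀ y ∈ SetO L, ∑ y' ∈ SetE L, T1 w y y' * φe k y' = lam k * φo k y)
    (horto : ∀ k k' : K, ∑ y ∈ SetO L, star (ψo k y) * φo k' y = if k = k' then 1 else 0)
    (horte : ∀ k k' : K, ∑ y ∈ SetE L, star (ψe k y) * φe k' y = if k = k' then 1 else 0)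
    (hcompo : ∀ y ∈ SetO L, ∀ y' ∈ SetO L,
      ∑ k : K, φo k y * star (ψo k y') = if y = y' then 1 else 0)
    (hcompe : ∀ y ∈ SetE L, ∀ y' ∈ SetE L,
      ∑ k : K, φe k y * star (ψe k y') = if y = y' then 1 else 0)
    (N : ℕ) :
    (∀ y ∈ UU (SetO L) N, ∀ y' ∈ UU (SetE L) N,
        TN w y y' =
          ∑ k ∈ UU (Finset.univ : Finset K) N,
            (∏ a, lam (k a)) * BA φo k y * star (BA ψe k y')) ∧
    (∀ y ∈ UU (SetE L) N, ∀ y' ∈ UU (SetO L) N,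
        TN w y y' =
          ∑ k ∈ UU (Finset.univ : Finset K) N,
            (∏ a, lam (k a)) * BA φe k y * star (BA ψo k y')) ∧
    (∀ y ∈ UU (SetE L) N, ∀ y' ∈ UU (SetE L) N,
        ∑ z ∈ UU (SetO L) N, TN w y z * TN w z y' =
          ∑ k ∈ UU (Finset.univ : Finset K) N,
            (∏ a, lam (k a)) ^ 2 * BA φe k y * star (BA ψe k y')) ∧
    (∀ y ∈ UU (SetO L) N, ∀ y' ∈ UU (SetO L) N,
        ∑ z ∈ UU (SetE L) N, TN w y z * TN w z y' =
          ∑ k ∈ UU (Finset.univ : Finset K) N,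
            (∏ a, lam (k a)) ^ 2 * BA φo k y * star (BA ψo k y')) := by
  have hO : ∀ x ∈ SetO L, ∀ x' ∈ SetO L, Even (x - x') := fun x hx x' hx' =>
    (mem_filter.mp hx).2.sub_odd (mem_filter.mp hx').2
  have hE : ∀ x ∈ SetE L, ∀ x' ∈ SetE L, Even (x - x') := fun x hx x' hx' =>
    (mem_filter.mp hx).2.sub (mem_filter.mp hx').2
  exact ⟨fun y hy y' hy' => TN_eq_sum_BA w hO hoe hcompe hy hy',
    fun y hy y' hy' => TN_eq_sum_BA w hE heo hcompo hy hy',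
    fun y hy y' hy' => sum_TN_mul_TN_eq_sum_BA w hE hO heo hoe horto hcompe hcompo hy hy',
    fun y hy y' hy' => sum_TN_mul_TN_eq_sum_BA w hO hE hoe heo horte hcompo hcompe hy hy'⟩

/-- spectral decomposition of the `N`-walk transfer matrices. -/
theorem bethe_spectral_decomposition (L : ℤ) (hL : Odd L) (hL1 : 1 ≤ L) (w : ℤ → ℤ → ℂ)
    (K : Type*) [Fintype K] [LinearOrder K] (hK : Fintype.card K = ((L + 1) / 2).toNat)
    (φo φe ψo ψe : K → ℤ → ℂ) (lam : K → ℂ)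
    (heo : ∀ k, ∀ y ∈ SetE L, ∑ y' ∈ SetO L, T1 w y y' * φo k y' = lam k * φe k y)
    (hoe : ∀ k, ∀ y ∈ SetO L, ∑ y' ∈ SetE L, T1 w y y' * φe k y' = lam k * φo k y)
    (horto : ∀ k k' : K, ∑ y ∈ SetO L, star (ψo k y) * φo k' y = if k = k' then 1 else 0)
    (horte : ∀ k k' : K, ∑ y ∈ SetE L, star (ψe k y) * φe k' y = if k = k' then 1 else 0)
    (hcompo : ∀ y ∈ SetO L, ∀ y' ∈ SetO L,
      ∑ k : K, φo k y * star (ψo k y') = if y = y' then 1 else 0)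
    (hcompe : ∀ y ∈ SetE L, ∀ y' ∈ SetE L,
      ∑ k : K, φe k y * star (ψe k y') = if y = y' then 1 else 0)
    (N : ℕ) (hN : 1 ≤ N) :
    (∀ y ∈ UU (SetO L) N, ∀ y' ∈ UU (SetE L) N,
        TN w y y' =
          ∑ k ∈ UU (Finset.univ : Finset K) N,
            (∏ a, lam (k a)) * BA φo k y * star (BA ψe k y')) ∧
    (∀ y ∈ UU (SetE L) N, ∀ y' ∈ UU (SetO L) N,
        TN w y y' =
          ∑ k ∈ UU (Finset.univ : Finset K) N,
            (∏ a, lam (k a)) * BA φe k y * star (BA ψo k y')) ∧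
    (∀ y ∈ UU (SetE L) N, ∀ y' ∈ UU (SetE L) N,
        ∑ z ∈ UU (SetO L) N, TN w y z * TN w z y' =
          ∑ k ∈ UU (Finset.univ : Finset K) N,
            (∏ a, lam (k a)) ^ 2 * BA φe k y * star (BA ψe k y')) ∧
    (∀ y ∈ UU (SetO L) N, ∀ y' ∈ UU (SetO L) N,
        ∑ z ∈ UU (SetE L) N, TN w y z * TN w z y' =
          ∑ k ∈ UU (Finset.univ : Finset K) N,
            (∏ a, lam (k a)) ^ 2 * BA φo k y * star (BA ψo k y')) :=
  bethe_spectral_decomposition_general L w K φo φe ψo ψe lam heo hoe horto horte hcompo hcompe N
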